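/- Let n ≥ 1 and let Fₙ : ℝⁿ → ℝ^{n+1} be the chart map of the cubic model of Sⁿ, defined by Fₙ(x) = (1, x)/√(1 + ‖x‖₂²). At the corner x = (1, 1, …, 1) of the cube [-1,1]ⁿ and with v = (1, 1, …, 1), the derivative of Fₙ satisfies ‖DFₙ(x)(v)‖₂ = (1/(n+1))·‖v‖₂; hence the lower distortion bound 1/(n+1) is attained. -/

import Mathlib

/-- The sup norm of a point of Euclidean space (the `ℓ^∞` norm). -/
noncomputable def supNorm {m : ℕ} (q : EuclideanSpace ℝ (Fin m)) : ℝ :=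
  ‖(EuclideanSpace.equiv (Fin m) ℝ) q‖

/-- The chart map `Fₙ : ℝⁿ → ℝ^{n+1}` of the cubic model of `Sⁿ`:
`Fₙ(x) = (1, x) / √(1 + ‖x‖₂²)`. -/
noncomputable def chartMapN (n : ℕ) (x : EuclideanSpace ℝ (Fin n)) :
    EuclideanSpace ℝ (Fin (n + 1)) :=
  (Real.sqrt (1 + ‖x‖ ^ 2))⁻¹ •
    (EuclideanSpace.equiv (Fin (n + 1)) ℝ).symm
      (Fin.cons 1 ((EuclideanSpace.equiv (Fin n) ℝ) x))

/-- The continuous linear map `x ↦ (0, x)`. -/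
noncomputable def consZeroCLM (n : ℕ) :
    EuclideanSpace ℝ (Fin n) →L[ℝ] EuclideanSpace ℝ (Fin (n + 1)) :=
  LinearMap.toContinuousLinearMap
    { toFun := fun x => (EuclideanSpace.equiv (Fin (n + 1)) ℝ).symm
        (Fin.cons 0 ((EuclideanSpace.equiv (Fin n) ℝ) x))
      map_add' := by
        intro a b
        ext i
        refine Fin.cases ?_ (fun j => ?_) i <;>
          simp [EuclideanSpace.equiv, PiLp.add_apply]
      map_smul' := by
        intro c a
        ext i
        refine Fin.cases ?_ (fun j => ?_) i <;>
          simp [EuclideanSpace.equiv, PiLp.smul_apply] }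

lemma consZeroCLM_apply (n : ℕ) (y : EuclideanSpace ℝ (Fin n)) :
    consZeroCLM n y = (EuclideanSpace.equiv (Fin (n + 1)) ℝ).symm
      (Fin.cons 0 ((EuclideanSpace.equiv (Fin n) ℝ) y)) := rfl

/-- At the corner `x = (1,…,1)` of the cube `[-1,1]ⁿ`, with `v = (1,…,1)`,
the derivative of `Fₙ` satisfies `‖DFₙ(x)(v)‖₂ = (1/(n+1))·‖v‖₂`; the lower distortion bound
`1/(n+1)` is attained. -/
theorem chartMapN_fderiv_corner (n : ℕ) (hn : 1 ≤ n) :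
    ‖fderiv ℝ (chartMapN n)
        ((EuclideanSpace.equiv (Fin n) ℝ).symm (fun _ => 1))
        ((EuclideanSpace.equiv (Fin n) ℝ).symm (fun _ => 1))‖ =
      (1 / (n + 1) : ℝ) * ‖(EuclideanSpace.equiv (Fin n) ℝ).symm (fun _ => (1 : ℝ))‖ := by
  set x₀ : EuclideanSpace ℝ (Fin n) :=
    (EuclideanSpace.equiv (Fin n) ℝ).symm (fun _ => 1) with hx₀
  have hx₀i : ∀ i, x₀ i = 1 := fun i => rfl
  have hnorm : ‖x₀‖ = Real.sqrt n := by
    rw [EuclideanSpace.norm_eq]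
    simp [hx₀i]
  have hnsq : ‖x₀‖ ^ 2 = (n : ℝ) := by
    rw [hnorm, Real.sq_sqrt (by positivity)]
  have hb : (0:ℝ) < 1 + ‖x₀‖ ^ 2 := by positivity
  have hbn : (1:ℝ) + ‖x₀‖ ^ 2 = (n:ℝ) + 1 := by rw [hnsq]; ring
  set c : EuclideanSpace ℝ (Fin (n + 1)) :=
    (EuclideanSpace.equiv (Fin (n + 1)) ℝ).symm (Fin.cons 1 0) with hc
  -- rewrite chartMapN
  have key : chartMapN n = fun x =>
      (Real.sqrt (1 + ‖x‖ ^ 2))⁻¹ • (c + consZeroCLM n x) := by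
    funext x
    unfold chartMapN
    congr 1
    ext i
    refine Fin.cases ?_ (fun j => ?_) i <;>
      simp [hc, consZeroCLM_apply, EuclideanSpace.equiv, PiLp.add_apply]
  -- derivative of x ↦ 1 + ‖x‖²
  have h1 : HasFDerivAt (fun x : EuclideanSpace ℝ (Fin n) => 1 + ‖x‖ ^ 2)
      ((2:ℕ) • (innerSL ℝ x₀)) x₀ := by
    have := ((hasFDerivAt_id x₀).norm_sq).const_add (1:ℝ)
    simpa using this
  -- derivative of t ↦ (√t)⁻¹ at 1 + ‖x₀‖²
  have hs0 : Real.sqrt (1 + ‖x₀‖ ^ 2) ≠ 0 := by positivity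
  have h2 : HasDerivAt (fun t : ℝ => (Real.sqrt t)⁻¹)
      (-(1 / (2 * Real.sqrt (1 + ‖x₀‖ ^ 2))) / (Real.sqrt (1 + ‖x₀‖ ^ 2)) ^ 2)
      (1 + ‖x₀‖ ^ 2) :=
    (Real.hasDerivAt_sqrt hb.ne').inv hs0
  have hφ : HasFDerivAt (fun x : EuclideanSpace ℝ (Fin n) => (Real.sqrt (1 + ‖x‖ ^ 2))⁻¹)
      ((-(1 / (2 * Real.sqrt (1 + ‖x₀‖ ^ 2))) / (Real.sqrt (1 + ‖x₀‖ ^ 2)) ^ 2) •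
        ((2:ℕ) • (innerSL ℝ x₀))) x₀ :=
    HasDerivAt.comp_hasFDerivAt (h₂ := fun t : ℝ => (Real.sqrt t)⁻¹)
      (f := fun x : EuclideanSpace ℝ (Fin n) => 1 + ‖x‖ ^ 2) x₀ h2 h1
  have hG : HasFDerivAt (fun x : EuclideanSpace ℝ (Fin n) => c + consZeroCLM n x)
      ((0 : _) + consZeroCLM n) x₀ :=
    (hasFDerivAt_const c x₀).add (consZeroCLM n).hasFDerivAt
  have hD : HasFDerivAt (fun x : EuclideanSpace ℝ (Fin n) =>
      (Real.sqrt (1 + ‖x‖ ^ 2))⁻¹ • (c + consZeroCLM n x)) _ x₀ := hφ.smul hG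
  rw [key, hD.fderiv]
  -- now evaluate
  have hinner : (innerSL ℝ x₀) x₀ = (n : ℝ) := by
    simp only [innerSL_apply_apply, real_inner_self_eq_norm_sq, hnsq]
  set a : ℝ := Real.sqrt (1 + ‖x₀‖ ^ 2) with ha
  have ha2 : a ^ 2 = (n:ℝ) + 1 := by
    rw [ha, Real.sq_sqrt hb.le, hbn]
  have hapos : 0 < a := Real.sqrt_pos.mpr hb
  set lam : ℝ := (-(1 / (2 * a)) / a ^ 2) * (2 * (n:ℝ)) with hlam
  set mu : ℝ := a⁻¹ with hmu
  -- components of the derivative applied to v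
  have happ : ∀ i, ((a⁻¹ • ((0 : _) + consZeroCLM n) +
      ((-(1 / (2 * a)) / a ^ 2) • ((2:ℕ) • (innerSL ℝ x₀))).smulRight
        (c + consZeroCLM n x₀)) x₀) i
      = lam * (Fin.cons (α := fun _ => ℝ) 1 (fun _ => 1) i) + mu * (Fin.cons (α := fun _ => ℝ) 0 (fun _ => 1) i) := by
    intro i
    simp only [ContinuousLinearMap.add_apply, ContinuousLinearMap.smul_apply,
      ContinuousLinearMap.smulRight_apply, ContinuousLinearMap.zero_apply,
      ContinuousLinearMap.coe_smul', Pi.smul_apply, hinner, zero_add]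
    rw [PiLp.add_apply, PiLp.smul_apply, PiLp.smul_apply, PiLp.add_apply]
    rw [consZeroCLM_apply]
    refine Fin.cases ?_ (fun j => ?_) i <;>
      simp [hc, EuclideanSpace.equiv, hlam, hmu, smul_eq_mul, hx₀i] <;> ring_nf
  rw [EuclideanSpace.norm_eq]
  have hsum : ∑ i : Fin (n + 1),
      ‖((a⁻¹ • ((0 : _) + consZeroCLM n) +
      ((-(1 / (2 * a)) / a ^ 2) • ((2:ℕ) • (innerSL ℝ x₀))).smulRight
        (c + consZeroCLM n x₀)) x₀) i‖ ^ 2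
      = lam ^ 2 + n * (lam + mu) ^ 2 := by
    rw [Fin.sum_univ_succ]
    simp only [happ]
    simp [Fin.cons_zero, Fin.cons_succ]
  rw [hsum, hnorm]
  -- numeric endgame
  have haa : a ^ 2 * a ≠ 0 := by positivity
  have hlamval : lam = -(n:ℝ) / (a ^ 2 * a) := by
    rw [hlam]; field_simp
  have hmu2 : mu = ((n:ℝ) + 1) / (a ^ 2 * a) := by
    rw [hmu, ← ha2, eq_div_iff haa]
    field_simp
  have hmuval : lam + mu = 1 / (a ^ 2 * a) := by
    rw [hlamval, hmu2, ← add_div,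
      show -(n:ℝ) + ((n:ℝ) + 1) = 1 by ring]
  have h6 : (a ^ 2 * a) ^ 2 = ((n:ℝ) + 1) ^ 3 := by
    rw [← ha2]; ring
  have hfin : lam ^ 2 + (n:ℝ) * (lam + mu) ^ 2 =
      ((1 / ((n:ℝ) + 1)) * Real.sqrt n) ^ 2 := by
    rw [hmuval, hlamval, mul_pow, Real.sq_sqrt (by positivity : (0:ℝ) ≤ (n:ℝ))]
    rw [div_pow, div_pow, h6]
    have hpos : ((n:ℝ) + 1) ^ 3 ≠ 0 := by positivity
    field_simp
  rw [hfin, Real.sqrt_sq (by positivity)]
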